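/- Let d, m ≥ 1 and let f_0, f_1, …, f_m : ℝ^d → ℝ be differentiable; suppose for each i ∈ {1,…,m} that f_i is L_i-Lipschitz and ∇f_i is M_i-Lipschitz, with L_i, M_i > 0. Set α_i = √d·M_i/2, α_max = max_{1≤i≤m} α_i, L_max = max_i L_i, M_max = max_i M_i. Let μ > 0, Λ > 0, η > 0, and let ξ = min{ η/(60 Λ Σ_{i=1}^m M_i), η/(12 μ), 1, η/(4Λ(α_max + 2 L_max + 2 M_max)) }. Let x, x' ∈ ℝ^d satisfy ‖x' − x‖ ≤ ξ and f_i(x') ≤ 0 for all i, and let ν satisfy 0 < ν ≤ min{ ξ, η/(12 α_max m Λ) }. Suppose λ ∈ ℝ^m satisfies 0 ≤ λ^{(i)} ≤ 2Λ for all i, together with the approximate KKT conditions of the quadratic subproblem: (a) ‖∇f_0(x') + 2μ(x' − x) + Σ_{i=1}^m λ^{(i)}( ∇^ν f_i(x) + 4M_i(x' − x) )‖ ≤ η/2, and (b) |λ^{(i)}( f_i(x) + ⟨∇^ν f_i(x), x' − x⟩ + 2M_i‖x' − x‖² )| ≤ η/2 for every i. Then (x', λ) is an η-KKT pair of the problem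 min f_0(x) subject to f_i(x) ≤ 0, i = 1,…,m: namely ‖∇f_0(x') + Σ_{i=1}^m λ^{(i)} ∇f_i(x')‖ ≤ η and |λ^{(i)} f_i(x')| ≤ η for every i. -/

import Mathlib

/-! The finite-difference estimator is within `√d M / 2 · ν` of the gradient, by the quadratic
bound `|f (x + v) - f x - ⟪∇ f x, v⟫| ≤ M / 2 ‖v‖²` applied along each coordinate direction.
Replacing the model gradient `∇^ν f_i(x) + 4 M_i (x' - x)` in (a) by `∇ f_i(x')` then costs at
most `α ν + 5 M_i ξ`, and dropping `2μ (x' - x)` costs `2 μ ξ`; replacing the model value in (b)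
by `f_i(x')` costs at most `ξ (α + 2 L + 2 M)`, by Lipschitz continuity and `ξ ≤ 1`. With weights
`λ_i ≤ 2Λ`, the choice of `ξ` and `ν` makes these perturbations add up to at most `η / 2`. -/

open scoped BigOperators

noncomputable def fdGrad {d : ℕ} (f : EuclideanSpace ℝ (Fin d) → ℝ) (ν : ℝ)
    (x : EuclideanSpace ℝ (Fin d)) : EuclideanSpace ℝ (Fin d) :=
  ∑ j : Fin d, ((f (x + ν • EuclideanSpace.single j (1 : ℝ)) - f x) / ν) •
    EuclideanSpace.single j (1 : ℝ)

open scoped Gradient RealInnerProductSpace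

/- No sign condition on `b` is needed: for `b ≤ 0`, including the junk value `a / 0 = 0`,
the hypothesis would force `t ≤ 0`. -/
theorem mul_le_of_le_div_of_pos {a b t : ℝ} (ht : 0 < t) (ha : 0 ≤ a) (h : t ≤ a / b) :
    t * b ≤ a := by
  rcases le_or_gt b 0 with hb | hb
  · exact absurd (h.trans (div_nonpos_of_nonneg_of_nonpos ha hb)) ht.not_ge
  · exact (le_div_iff₀ hb).1 h

theorem EuclideanSpace.norm_le_sqrt_card_mul {ι 𝕜 : Type*} [Fintype ι] [RCLike 𝕜]
    (v : EuclideanSpace 𝕜 ι) {C : ℝ} (hC : 0 ≤ C) (h : ∀ j, ‖v j‖ ≤ C) :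
    ‖v‖ ≤ √(Fintype.card ι) * C := by
  calc ‖v‖ = √(∑ j, ‖v j‖ ^ 2) := EuclideanSpace.norm_eq v
    _ ≤ √(∑ _j : ι, C ^ 2) := by gcongr with j; exact h j
    _ = √(Fintype.card ι) * C := by
      rw [Finset.sum_const, Finset.card_univ, nsmul_eq_mul, Real.sqrt_mul (Nat.cast_nonneg _),
        Real.sqrt_sq hC]

theorem abs_sub_linearization_le {F : Type*} [NormedAddCommGroup F] [InnerProductSpace ℝ F]
    {f : F → ℝ} {L c : ℝ} (hlip : ∀ x y, |f x - f y| ≤ L * ‖x - y‖) (hc : 0 ≤ c) (x y g : F) :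
    |f y - (f x + ⟪g, y - x⟫ + c * ‖y - x‖ ^ 2)| ≤ (L + ‖g‖) * ‖y - x‖ + c * ‖y - x‖ ^ 2 := by
  have hinner : |⟪g, y - x⟫| ≤ ‖g‖ * ‖y - x‖ := abs_real_inner_le_norm g (y - x)
  have hquad : |c * ‖y - x‖ ^ 2| = c * ‖y - x‖ ^ 2 := abs_of_nonneg (by positivity)
  calc |f y - (f x + ⟪g, y - x⟫ + c * ‖y - x‖ ^ 2)|
      = |(f y - f x) - ⟪g, y - x⟫ - c * ‖y - x‖ ^ 2| := by congr 1; ring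
    _ ≤ (L + ‖g‖) * ‖y - x‖ + c * ‖y - x‖ ^ 2 := by
      linarith [abs_sub (f y - f x - ⟪g, y - x⟫) (c * ‖y - x‖ ^ 2),
        abs_sub (f y - f x) ⟪g, y - x⟫, hlip y x]

theorem norm_add_sum_smul_le_of_norm_sub_le {ι E : Type*} [Fintype ι] [SeminormedAddCommGroup E]
    [NormedSpace ℝ E] {G p : E} {u w : ι → E} {lam r : ι → ℝ} {Λ ε : ℝ}
    (hlam0 : ∀ i, 0 ≤ lam i) (hlam : ∀ i, lam i ≤ Λ) (huw : ∀ i, ‖u i - w i‖ ≤ r i)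
    (h : ‖G + p + ∑ i, lam i • u i‖ ≤ ε) :
    ‖G + ∑ i, lam i • w i‖ ≤ ε + ‖p‖ + Λ * ∑ i, r i := by
  have hsum : ‖∑ i, lam i • (u i - w i)‖ ≤ Λ * ∑ i, r i := by
    rw [Finset.mul_sum]
    refine (norm_sum_le _ _).trans (Finset.sum_le_sum fun i _ => ?_)
    rw [norm_smul, Real.norm_of_nonneg (hlam0 i)]
    exact mul_le_mul (hlam i) (huw i) (norm_nonneg _) ((hlam0 i).trans (hlam i))
  have hsplit : G + ∑ i, lam i • w i
      = (G + p + ∑ i, lam i • u i) - p - ∑ i, lam i • (u i - w i) := by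
    simp only [smul_sub, Finset.sum_sub_distrib]
    abel
  rw [hsplit]
  linarith [norm_sub_le (G + p + ∑ i, lam i • u i - p) (∑ i, lam i • (u i - w i)),
    norm_sub_le (G + p + ∑ i, lam i • u i) p]

section Gradient

variable {F : Type*} [NormedAddCommGroup F] [InnerProductSpace ℝ F] [CompleteSpace F]
  {f : F → ℝ}

theorem norm_gradient_le_of_lipschitz {L : ℝ} (hL : 0 ≤ L)
    (hlip : ∀ x y, |f x - f y| ≤ L * ‖x - y‖) (x : F) : ‖∇ f x‖ ≤ L := by
  have : ‖fderiv ℝ f x‖ ≤ L :=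
    norm_fderiv_le_of_lip' ℝ hL (Filter.Eventually.of_forall fun y => hlip y x)
  simpa [gradient] using this

theorem abs_sub_sub_inner_gradient_le (hf : Differentiable ℝ f) {M : ℝ}
    (hg : ∀ x y, ‖∇ f x - ∇ f y‖ ≤ M * ‖x - y‖) (x v : F) :
    |f (x + v) - f x - ⟪∇ f x, v⟫| ≤ M / 2 * ‖v‖ ^ 2 := by
  -- `g` vanishes at `0` and `|g' t| ≤ M ‖v‖² t`, so it is dominated by `M / 2 ‖v‖² t²`.
  set g : ℝ → ℝ := fun t => f (x + t • v) - f x - t * ⟪∇ f x, v⟫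
  have hderiv : ∀ t, HasDerivAt g (⟪∇ f (x + t • v) - ∇ f x, v⟫) t := by
    intro t
    have hline : HasDerivAt (fun t : ℝ => x + t • v) v t := by
      simpa using ((hasDerivAt_id t).smul_const v).const_add x
    have := (((hf _).hasFDerivAt.comp_hasDerivAt t hline).sub_const (f x)).sub
      ((hasDerivAt_id t).mul_const ⟪∇ f x, v⟫)
    rwa [one_mul, ← inner_gradient_left, ← inner_sub_left] at this
  have hbound : ∀ t ∈ Set.Ico (0 : ℝ) 1, ‖⟪∇ f (x + t • v) - ∇ f x, v⟫‖ ≤ M * ‖v‖ ^ 2 * t := by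
    rintro t ⟨ht, -⟩
    calc ‖⟪∇ f (x + t • v) - ∇ f x, v⟫‖ ≤ ‖∇ f (x + t • v) - ∇ f x‖ * ‖v‖ :=
          norm_inner_le_norm _ _
      _ ≤ M * ‖t • v‖ * ‖v‖ := by gcongr; simpa using hg (x + t • v) x
      _ = M * ‖v‖ ^ 2 * t := by rw [norm_smul, Real.norm_of_nonneg ht]; ring
  have hB : ∀ t : ℝ, HasDerivAt (fun t => M / 2 * ‖v‖ ^ 2 * t ^ 2) (M * ‖v‖ ^ 2 * t) t :=
    fun t => ((hasDerivAt_pow 2 t).const_mul (M / 2 * ‖v‖ ^ 2)).congr_deriv (by simp; ring)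
  have := image_norm_le_of_norm_deriv_right_le_deriv_boundary
    (fun t _ => (hderiv t).continuousAt.continuousWithinAt)
    (fun t _ => (hderiv t).hasDerivWithinAt) (by simp [g]) hB hbound
    (Set.right_mem_Icc.2 zero_le_one)
  simpa [g] using this

theorem norm_add_smul_sub_gradient_le {M c δ : ℝ} (hg : ∀ x y, ‖∇ f x - ∇ f y‖ ≤ M * ‖x - y‖)
    (hc : 0 ≤ c) {x y g : F} (hgx : ‖g - ∇ f x‖ ≤ δ) :
    ‖g + c • (y - x) - ∇ f y‖ ≤ δ + (M + c) * ‖y - x‖ := by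
  have hsplit : g + c • (y - x) - ∇ f y = (g - ∇ f x) + (∇ f x - ∇ f y) + c • (y - x) := by abel
  rw [hsplit]
  calc ‖(g - ∇ f x) + (∇ f x - ∇ f y) + c • (y - x)‖
      ≤ ‖g - ∇ f x‖ + ‖∇ f x - ∇ f y‖ + ‖c • (y - x)‖ := norm_add₃_le
    _ ≤ δ + M * ‖y - x‖ + c * ‖y - x‖ := by
      rw [norm_smul, Real.norm_of_nonneg hc, norm_sub_rev y x]
      gcongr
      exact hg x y
    _ = δ + (M + c) * ‖y - x‖ := by ring

theorem abs_mul_le_of_abs_mul_linearization_le {L c lam Λ δ r ε : ℝ} {x y g : F}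
    (hL : 0 ≤ L) (hlip : ∀ x y, |f x - f y| ≤ L * ‖x - y‖) (hc : 0 ≤ c) (hlam0 : 0 ≤ lam)
    (hlam : lam ≤ Λ) (hgx : ‖g - ∇ f x‖ ≤ δ) (hr : ‖y - x‖ ≤ r) (hr1 : r ≤ 1)
    (h : |lam * (f x + ⟪g, y - x⟫ + c * ‖y - x‖ ^ 2)| ≤ ε) :
    |lam * f y| ≤ ε + Λ * (r * (δ + 2 * L + c)) := by
  set S := f x + ⟪g, y - x⟫ + c * ‖y - x‖ ^ 2
  have hg : ‖g‖ ≤ L + δ := by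
    linarith [norm_le_insert' g (∇ f x), norm_gradient_le_of_lipschitz hL hlip x]
  have hsq : ‖y - x‖ ^ 2 ≤ r := by nlinarith [norm_nonneg (y - x)]
  have hgap : |f y - S| ≤ r * (δ + 2 * L + c) := by
    have hlin : (L + ‖g‖) * ‖y - x‖ ≤ (2 * L + δ) * r :=
      mul_le_mul (by linarith) hr (norm_nonneg _) (by linarith [norm_nonneg (g - ∇ f x)])
    linarith [abs_sub_linearization_le hlip hc x y g, mul_le_mul_of_nonneg_left hsq hc]
  calc |lam * f y| = |lam * S + lam * (f y - S)| := by congr 1; ring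
    _ ≤ |lam * S| + |lam * (f y - S)| := abs_add_le _ _
    _ = |lam * S| + lam * |f y - S| := by rw [abs_mul lam (f y - S), abs_of_nonneg hlam0]
    _ ≤ ε + Λ * (r * (δ + 2 * L + c)) :=
      add_le_add h (mul_le_mul hlam hgap (abs_nonneg _) (hlam0.trans hlam))

theorem norm_add_sum_smul_gradient_le {ι : Type*} [Fintype ι] {f : ι → F → ℝ} {M lam : ι → ℝ}
    {g : ι → F} {G x y : F} {μ Λ δ r ε : ℝ} (hM : ∀ i, 0 ≤ M i)
    (hgrad : ∀ i x y, ‖∇ (f i) x - ∇ (f i) y‖ ≤ M i * ‖x - y‖) (hμ : 0 ≤ μ)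
    (hlam0 : ∀ i, 0 ≤ lam i) (hlam : ∀ i, lam i ≤ Λ) (hgx : ∀ i, ‖g i - ∇ (f i) x‖ ≤ δ)
    (hr : ‖y - x‖ ≤ r)
    (h : ‖G + (2 * μ) • (y - x) + ∑ i, lam i • (g i + (4 * M i) • (y - x))‖ ≤ ε) :
    ‖G + ∑ i, lam i • ∇ (f i) y‖ ≤ ε + 2 * μ * r + Λ * (Fintype.card ι * δ + 5 * r * ∑ i, M i) := by
  have hres : ∀ i, ‖g i + (4 * M i) • (y - x) - ∇ (f i) y‖ ≤ δ + 5 * M i * r := fun i =>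
    (norm_add_smul_sub_gradient_le (hgrad i) (by linarith [hM i]) (hgx i)).trans
      (by linarith [mul_le_mul_of_nonneg_left hr (by linarith [hM i] : 0 ≤ M i + 4 * M i)])
  have hp : ‖(2 * μ) • (y - x)‖ ≤ 2 * μ * r := by
    rw [norm_smul, Real.norm_of_nonneg (by positivity)]; gcongr
  have hsum : ∑ i, (δ + 5 * M i * r) = Fintype.card ι * δ + 5 * r * ∑ i, M i := by
    simp only [Finset.sum_add_distrib, Finset.sum_const, Finset.card_univ, nsmul_eq_mul,
      ← Finset.sum_mul, ← Finset.mul_sum]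
    ring
  have := norm_add_sum_smul_le_of_norm_sub_le hlam0 hlam hres h
  rw [hsum] at this
  linarith

end Gradient

section FiniteDifference

variable {d : ℕ} {f : EuclideanSpace ℝ (Fin d) → ℝ} {ν : ℝ}

theorem fdGrad_apply (x : EuclideanSpace ℝ (Fin d)) (j : Fin d) :
    fdGrad f ν x j = (f (x + ν • EuclideanSpace.single j 1) - f x) / ν := by
  simp [fdGrad, Finset.sum_apply, Pi.single_apply]

theorem norm_fdGrad_sub_gradient_le (hf : Differentiable ℝ f) {M : ℝ} (hM : 0 ≤ M)
    (hg : ∀ x y, ‖∇ f x - ∇ f y‖ ≤ M * ‖x - y‖) (hν : 0 < ν) (x : EuclideanSpace ℝ (Fin d)) :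
    ‖fdGrad f ν x - ∇ f x‖ ≤ √d * M / 2 * ν := by
  have hcoord : ∀ j, ‖(fdGrad f ν x - ∇ f x) j‖ ≤ M / 2 * ν := by
    intro j
    set v := ν • EuclideanSpace.single j (1 : ℝ) with hv_def
    have hv : ‖v‖ = ν := by simp [v, norm_smul, abs_of_pos hν]
    have hinner : ⟪∇ f x, v⟫ = ν * ∇ f x j := by
      rw [real_inner_smul_right, EuclideanSpace.inner_single_right, one_mul, conj_trivial]
    have htaylor := abs_sub_sub_inner_gradient_le hf hg x v
    rw [hv, hinner] at htaylor
    have hdiff : (fdGrad f ν x - ∇ f x) j = (f (x + v) - f x - ν * ∇ f x j) / ν := by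
      rw [PiLp.sub_apply, fdGrad_apply, ← hv_def]; field_simp
    rw [hdiff, Real.norm_eq_abs, abs_div, abs_of_pos hν, div_le_iff₀ hν]
    linarith
  calc ‖fdGrad f ν x - ∇ f x‖ ≤ √(Fintype.card (Fin d)) * (M / 2 * ν) :=
        EuclideanSpace.norm_le_sqrt_card_mul _ (by positivity) hcoord
    _ = √d * M / 2 * ν := by rw [Fintype.card_fin]; ring

end FiniteDifference

theorem stmt11_general {d m : ℕ}
    (f0 : EuclideanSpace ℝ (Fin d) → ℝ) (f : Fin m → EuclideanSpace ℝ (Fin d) → ℝ)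
    (hf : ∀ i, Differentiable ℝ (f i))
    (L M : Fin m → ℝ) (hL : ∀ i, 0 < L i) (hM : ∀ i, 0 < M i)
    (hlip : ∀ i, ∀ x y : EuclideanSpace ℝ (Fin d), |f i x - f i y| ≤ L i * ‖x - y‖)
    (hglip : ∀ i, ∀ x y : EuclideanSpace ℝ (Fin d),
      ‖gradient (f i) x - gradient (f i) y‖ ≤ M i * ‖x - y‖)
    (αmax Lmax Mmax : ℝ)
    (hαmax : IsGreatest (Set.range fun i => Real.sqrt d * M i / 2) αmax)
    (hLmax : IsGreatest (Set.range L) Lmax)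
    (hMmax : IsGreatest (Set.range M) Mmax)
    (μ Λ η : ℝ) (hμ : 0 < μ) (hη : 0 < η)
    (ξ : ℝ)
    (hξ : ξ = min (η / (60 * Λ * ∑ i : Fin m, M i))
      (min (η / (12 * μ))
        (min 1 (η / (4 * Λ * (αmax + 2 * Lmax + 2 * Mmax))))))
    (xk xk1 : EuclideanSpace ℝ (Fin d))
    (hstep : ‖xk1 - xk‖ ≤ ξ)
    (ν : ℝ) (hν0 : 0 < ν)
    (hν : ν ≤ min ξ (η / (12 * αmax * m * Λ)))
    (lam : Fin m → ℝ) (hlam0 : ∀ i, 0 ≤ lam i) (hlam2Λ : ∀ i, lam i ≤ 2 * Λ)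
    (ha : ‖gradient f0 xk1 + (2 * μ) • (xk1 - xk) +
        ∑ i : Fin m, lam i • (fdGrad (f i) ν xk + (4 * M i) • (xk1 - xk))‖ ≤ η / 2)
    (hb : ∀ i : Fin m,
      |lam i * (f i xk + (inner ℝ (fdGrad (f i) ν xk) (xk1 - xk) : ℝ)
          + 2 * M i * ‖xk1 - xk‖ ^ 2)| ≤ η / 2) :
    ‖gradient f0 xk1 + ∑ i : Fin m, lam i • gradient (f i) xk1‖ ≤ η ∧
    ∀ i : Fin m, |lam i * f i xk1| ≤ η := by
  obtain ⟨hνξ, hνα⟩ := le_min_iff.1 hν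
  have hξ0 : 0 < ξ := hν0.trans_le hνξ
  obtain ⟨hξM, hξμ, hξ1, hξLM⟩ : ξ ≤ _ ∧ ξ ≤ _ ∧ ξ ≤ 1 ∧ ξ ≤ _ := by
    simpa only [le_min_iff] using hξ.le
  replace hξM := mul_le_of_le_div_of_pos hξ0 hη.le hξM
  replace hξμ := mul_le_of_le_div_of_pos hξ0 hη.le hξμ
  replace hξLM := mul_le_of_le_div_of_pos hξ0 hη.le hξLM
  replace hνα := mul_le_of_le_div_of_pos hν0 hη.le hνα
  have hfd : ∀ i, ‖fdGrad (f i) ν xk - ∇ (f i) xk‖ ≤ αmax * ν := fun i =>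
    (norm_fdGrad_sub_gradient_le (hf i) (hM i).le (hglip i) hν0 xk).trans
      (mul_le_mul_of_nonneg_right (hαmax.2 ⟨i, rfl⟩) hν0.le)
  refine ⟨?_, fun i => ?_⟩
  · have hstat := norm_add_sum_smul_gradient_le (fun i => (hM i).le) hglip hμ.le hlam0 hlam2Λ
      hfd hstep ha
    rw [Fintype.card_fin] at hstat
    linarith
  · have hslack := abs_mul_le_of_abs_mul_linearization_le (hL i).le (hlip i)
      (by linarith [hM i]) (hlam0 i) (hlam2Λ i) (hfd i) hstep hξ1 (hb i)
    have hα0 : 0 ≤ αmax :=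
      (by have := hM i; positivity : 0 ≤ √d * M i / 2).trans (hαmax.2 ⟨i, rfl⟩)
    have hmono : 2 * Λ * (ξ * (αmax * ν + 2 * L i + 2 * M i))
        ≤ 2 * Λ * (ξ * (αmax + 2 * Lmax + 2 * Mmax)) := by
      have hΛ : 0 ≤ 2 * Λ := (hlam0 i).trans (hlam2Λ i)
      have hαν : αmax * ν ≤ αmax := mul_le_of_le_one_right hα0 (hνξ.trans hξ1)
      gcongr
      exacts [hLmax.2 ⟨i, rfl⟩, hMmax.2 ⟨i, rfl⟩]
    linarith

/-- If `(x', λ)` satisfies the `η/2`-approximate KKT conditions of the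
quadratic subproblem at the previous iterate `x`, with `‖x' − x‖ ≤ ξ`,
`λ^{(i)} ∈ [0, 2Λ]`, and `ξ`, `ν` chosen according to the paper's formulas,
then `(x', λ)` is an `η`-KKT pair of the original problem. -/
theorem stmt11 {d m : ℕ} (hd : 1 ≤ d) (hm : 1 ≤ m)
    (f0 : EuclideanSpace ℝ (Fin d) → ℝ) (f : Fin m → EuclideanSpace ℝ (Fin d) → ℝ)
    (hf0 : Differentiable ℝ f0) (hf : ∀ i, Differentiable ℝ (f i))
    (L M : Fin m → ℝ) (hL : ∀ i, 0 < L i) (hM : ∀ i, 0 < M i)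
    (hlip : ∀ i, ∀ x y : EuclideanSpace ℝ (Fin d), |f i x - f i y| ≤ L i * ‖x - y‖)
    (hglip : ∀ i, ∀ x y : EuclideanSpace ℝ (Fin d),
      ‖gradient (f i) x - gradient (f i) y‖ ≤ M i * ‖x - y‖)
    (αmax Lmax Mmax : ℝ)
    (hαmax : IsGreatest (Set.range fun i => Real.sqrt d * M i / 2) αmax)
    (hLmax : IsGreatest (Set.range L) Lmax)
    (hMmax : IsGreatest (Set.range M) Mmax)
    (μ Λ η : ℝ) (hμ : 0 < μ) (hΛ : 0 < Λ) (hη : 0 < η)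
    (ξ : ℝ)
    (hξ : ξ = min (η / (60 * Λ * ∑ i : Fin m, M i))
      (min (η / (12 * μ))
        (min 1 (η / (4 * Λ * (αmax + 2 * Lmax + 2 * Mmax))))))
    (xk xk1 : EuclideanSpace ℝ (Fin d))
    (hstep : ‖xk1 - xk‖ ≤ ξ) (hfeas : ∀ i, f i xk1 ≤ 0)
    (ν : ℝ) (hν0 : 0 < ν)
    (hν : ν ≤ min ξ (η / (12 * αmax * m * Λ)))
    (lam : Fin m → ℝ) (hlam0 : ∀ i, 0 ≤ lam i) (hlam2Λ : ∀ i, lam i ≤ 2 * Λ)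
    (ha : ‖gradient f0 xk1 + (2 * μ) • (xk1 - xk) +
        ∑ i : Fin m, lam i • (fdGrad (f i) ν xk + (4 * M i) • (xk1 - xk))‖ ≤ η / 2)
    (hb : ∀ i : Fin m,
      |lam i * (f i xk + (inner ℝ (fdGrad (f i) ν xk) (xk1 - xk) : ℝ)
          + 2 * M i * ‖xk1 - xk‖ ^ 2)| ≤ η / 2) :
    ‖gradient f0 xk1 + ∑ i : Fin m, lam i • gradient (f i) xk1‖ ≤ η ∧
    ∀ i : Fin m, |lam i * f i xk1| ≤ η :=
  stmt11_general f0 f hf L M hL hM hlip hglip αmax Lmax Mmax hαmax hLmax hMmax μ Λ η hμ hη ξ hξ xk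
    xk1 hstep ν hν0 hν lam hlam0 hlam2Λ ha hb
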